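/- (Sharpness of the order Υ^{1/2} in the H¹-estimate of Lemma 2: the shifted-disc example of Remark 4, claim ‖∇(u−u_r)‖_Ω = √8·Υ^{1/2} + O(Υ).) There exists a constant C > 0 such that for all Υ ∈ (0,1): | ∫_{Ω∩Ω_r} ‖∇u(x) − ∇u_r(x)‖² dx + ∫_{Ω∖Ω_r} ‖∇u(x)‖² dx − 8Υ | ≤ C·Υ². (The left-hand sum equals ∫_Ω ‖∇(u−u_r)‖² dx, since u_r vanishes on Ω∖Ω_r.) -/

import Mathlib

open MeasureTheory Set Real

/-- A point of the Euclidean plane given by its two coordinates. -/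
noncomputable def pt2 (a b : ℝ) : EuclideanSpace ℝ (Fin 2) :=
  (WithLp.equiv 2 (Fin 2 → ℝ)).symm ![a, b]

/-- Centre `(Υ, 0)` of the shifted disc. -/
noncomputable def ctr (Υ : ℝ) : EuclideanSpace ℝ (Fin 2) := pt2 Υ 0

/-- The solution `u(x) = 1 − ‖x‖²` on the unit disc, extended by zero. -/
noncomputable def uSol (x : EuclideanSpace ℝ (Fin 2)) : ℝ :=
  if ‖x‖ < 1 then 1 - ‖x‖^2 else 0

/-- The solution `u_r(x) = 1 − ‖x − (Υ,0)‖²` on the shifted disc, extended by zero. -/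
noncomputable def urSol (Υ : ℝ) (x : EuclideanSpace ℝ (Fin 2)) : ℝ :=
  if ‖x - ctr Υ‖ < 1 then 1 - ‖x - ctr Υ‖^2 else 0

/-! On the lens `Ω ∩ Ω_r` the gradients `-2x` and `-2(x - (Υ,0))` differ by the constant `2(Υ,0)`,
so the first integral is `4Υ²·|Ω ∩ Ω_r| ≤ 4πΥ²`. The second integral is `∫ 4‖x‖²` over the lune
`Ω \ Ω_r`, which at height `y` (with `s = √(1 - y²)`) is the segment `(-s, s) ∩ (-∞, Υ - s]`.
For `s > Υ/2` this is `(-s, Υ - s]` and the slice integral is `4Υ + 4Υ³/3 - 4Υ²s = 4Υ + O(Υ²)`;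
the heights with `s ≤ Υ/2` form a set of measure `O(Υ²)` on which the slice integral stays in
`[0, 4Υ]`. Integrating over `y ∈ (-1, 1)` gives `8Υ + O(Υ²)`. -/

theorem norm_pt2_sq (a b : ℝ) : ‖pt2 a b‖ ^ 2 = a ^ 2 + b ^ 2 := by
  simp [EuclideanSpace.norm_sq_eq, pt2, Fin.sum_univ_two]

theorem pt2_sub_pt2 (a b c d : ℝ) : pt2 a b - pt2 c d = pt2 (a - c) (b - d) := by
  ext i; fin_cases i <;> simp [pt2]

theorem measurePreserving_pt2 : MeasurePreserving (fun p : ℝ × ℝ => pt2 p.1 p.2) :=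
  (PiLp.volume_preserving_toLp (Fin 2)).comp
    ((volume_preserving_finTwoArrow ℝ).symm MeasurableEquiv.finTwoArrow)

theorem integral_euclideanSpace_fin_two (f : EuclideanSpace ℝ (Fin 2) → ℝ) :
    ∫ x, f x = ∫ p : ℝ × ℝ, f (pt2 p.1 p.2) :=
  (measurePreserving_pt2.integral_comp (MeasurableEquiv.finTwoArrow.symm.trans
    (MeasurableEquiv.toLp 2 (Fin 2 → ℝ))).measurableEmbedding f).symm

noncomputable def paraboloidCap {E : Type*} [NormedAddCommGroup E] (c y : E) : ℝ :=
  if ‖y - c‖ < 1 then 1 - ‖y - c‖ ^ 2 else 0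

section Gradient

variable {E : Type*} [NormedAddCommGroup E] [InnerProductSpace ℝ E] [CompleteSpace E]

theorem hasGradientAt_one_sub_norm_sub_sq (c x : E) :
    HasGradientAt (fun y => 1 - ‖y - c‖ ^ 2) ((-2 : ℝ) • (x - c)) x := by
  rw [hasGradientAt_iff_hasFDerivAt]
  refine ((hasFDerivAt_const (1 : ℝ) x).sub
    ((hasFDerivAt_id x).sub_const c).norm_sq).congr_fderiv ?_
  ext y
  simp

theorem gradient_paraboloidCap {c x : E} (hx : ‖x - c‖ < 1) :
    gradient (paraboloidCap c) x = (-2 : ℝ) • (x - c) := by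
  have hloc : paraboloidCap c =ᶠ[nhds x] fun y => 1 - ‖y - c‖ ^ 2 := by
    filter_upwards [Metric.isOpen_ball.mem_nhds (mem_ball_iff_norm.mpr hx)] with y hy
    rw [paraboloidCap, if_pos (mem_ball_iff_norm.mp hy)]
  rw [hloc.gradient_eq]
  exact (hasGradientAt_one_sub_norm_sub_sq c x).gradient

end Gradient

theorem gradient_uSol {x : EuclideanSpace ℝ (Fin 2)} (hx : ‖x‖ < 1) :
    gradient uSol x = (-2 : ℝ) • x := by
  have hcap : uSol = paraboloidCap 0 := by
    ext y
    simp only [uSol, paraboloidCap, sub_zero]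
  rw [hcap, gradient_paraboloidCap (by rwa [sub_zero]), sub_zero]

theorem gradient_urSol {Υ : ℝ} {x : EuclideanSpace ℝ (Fin 2)} (hx : ‖x - ctr Υ‖ < 1) :
    gradient (urSol Υ) x = (-2 : ℝ) • (x - ctr Υ) :=
  gradient_paraboloidCap hx

def lune (Υ : ℝ) : Set (ℝ × ℝ) := {p | p.1 ^ 2 + p.2 ^ 2 < 1 ∧ 1 ≤ (p.1 - Υ) ^ 2 + p.2 ^ 2}

theorem measurableSet_lune (Υ : ℝ) : MeasurableSet (lune Υ) :=
  (measurableSet_lt (f := fun p : ℝ × ℝ => p.1 ^ 2 + p.2 ^ 2) (by fun_prop) measurable_const).inter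
    (measurableSet_le (g := fun p : ℝ × ℝ => (p.1 - Υ) ^ 2 + p.2 ^ 2) measurable_const
      (by fun_prop))

theorem integral_four_mul_sq_add_sq (y a b : ℝ) :
    ∫ x in a..b, 4 * (x ^ 2 + y ^ 2) = 4 / 3 * (b ^ 3 - a ^ 3) + 4 * y ^ 2 * (b - a) := by
  rw [intervalIntegral.integral_const_mul, intervalIntegral.integral_add
    ((continuous_pow 2).intervalIntegrable a b) intervalIntegrable_const, integral_pow,
    intervalIntegral.integral_const, smul_eq_mul]
  ring

section Slice

variable {Υ y s : ℝ}

theorem mk_mem_lune_iff (hΥ : 0 ≤ Υ) (hs : 0 ≤ s) (hsy : s ^ 2 + y ^ 2 = 1) (x : ℝ) :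
    (x, y) ∈ lune Υ ↔ x ∈ Ioo (-s) s ∩ Iic (Υ - s) := by
  simp only [lune, mem_ofPred_eq, mem_inter_iff, mem_Ioo, mem_Iic]
  constructor
  · rintro ⟨hin, hout⟩
    have hxs : -s < x ∧ x < s := ⟨by nlinarith, by nlinarith⟩
    refine ⟨hxs, ?_⟩
    by_contra! h
    nlinarith
  · rintro ⟨⟨hxl, hxr⟩, hxΥ⟩
    constructor <;> nlinarith

theorem integral_lune_slice (hΥ : 0 ≤ Υ) (hs : 0 ≤ s) (hsy : s ^ 2 + y ^ 2 = 1) :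
    ∫ x, (lune Υ).indicator (fun p => 4 * (p.1 ^ 2 + p.2 ^ 2)) (x, y)
      = ∫ x in Ioo (-s) s ∩ Iic (Υ - s), 4 * (x ^ 2 + y ^ 2) := by
  rw [← integral_indicator (measurableSet_Ioo.inter measurableSet_Iic)]
  congr 1 with x
  by_cases hx : x ∈ Ioo (-s) s ∩ Iic (Υ - s)
  · rw [indicator_of_mem ((mk_mem_lune_iff hΥ hs hsy x).mpr hx), indicator_of_mem hx]
  · rw [indicator_of_notMem (mt (mk_mem_lune_iff hΥ hs hsy x).mp hx), indicator_of_notMem hx]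

theorem integral_lune_slice_of_half_lt (hΥ : 0 ≤ Υ) (hs : Υ / 2 < s) (hsy : s ^ 2 + y ^ 2 = 1) :
    ∫ x, (lune Υ).indicator (fun p => 4 * (p.1 ^ 2 + p.2 ^ 2)) (x, y)
      = 4 * Υ + 4 / 3 * Υ ^ 3 - 4 * Υ ^ 2 * s := by
  have hslice : Ioo (-s) s ∩ Iic (Υ - s) = Ioc (-s) (Υ - s) := by
    ext x
    simp only [mem_inter_iff, mem_Ioo, mem_Iic, mem_Ioc]
    exact ⟨fun ⟨⟨hl, _⟩, hr⟩ => ⟨hl, hr⟩, fun ⟨hl, hr⟩ => ⟨⟨hl, by linarith⟩, hr⟩⟩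
  rw [integral_lune_slice hΥ (by linarith) hsy, hslice,
    ← intervalIntegral.integral_of_le (by linarith), integral_four_mul_sq_add_sq]
  linear_combination (4 * Υ) * hsy

theorem integral_lune_slice_of_le_half (hΥ : 0 ≤ Υ) (hs₀ : 0 ≤ s) (hs : s ≤ Υ / 2)
    (hsy : s ^ 2 + y ^ 2 = 1) :
    ∫ x, (lune Υ).indicator (fun p => 4 * (p.1 ^ 2 + p.2 ^ 2)) (x, y)
      = 8 / 3 * s ^ 3 + 8 * y ^ 2 * s := by
  have hslice : Ioo (-s) s ∩ Iic (Υ - s) = Ioo (-s) s :=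
    inter_eq_left.mpr fun x hx => by simp only [mem_Iic]; linarith [hx.2]
  rw [integral_lune_slice hΥ hs₀ hsy, hslice, integral_Ioc_eq_integral_Ioo.symm,
    ← intervalIntegral.integral_of_le (by linarith), integral_four_mul_sq_add_sq]
  ring

end Slice

theorem abs_integral_lune_slice_sub_le {Υ : ℝ} (h0 : 0 ≤ Υ) (h1 : Υ ≤ 1) (y : ℝ) :
    |(∫ x, (lune Υ).indicator (fun p => 4 * (p.1 ^ 2 + p.2 ^ 2)) (x, y))
        - (Ioo (-1) 1).indicator (fun _ => 4 * Υ) y|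
      ≤ (Ioo (-1) 1).indicator (fun _ => 4 * Υ ^ 2) y
        + (Ioo (-1) 1 \ Ioo (-(1 - Υ ^ 2 / 4)) (1 - Υ ^ 2 / 4)).indicator (fun _ => 4 * Υ) y := by
  by_cases hy : y ∈ Ioo (-1) 1
  · rw [indicator_of_mem hy, indicator_of_mem hy]
    obtain ⟨hyl, hyr⟩ := hy
    set s := √(1 - y ^ 2)
    have hs₀ : 0 ≤ s := sqrt_nonneg _
    have hsy : s ^ 2 + y ^ 2 = 1 := by rw [sq_sqrt (by nlinarith)]; ring
    rcases lt_or_ge (Υ / 2) s with hs_large | hs_small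
    · have hfar_nonneg : 0 ≤ (Ioo (-1) 1 \ Ioo (-(1 - Υ ^ 2 / 4)) (1 - Υ ^ 2 / 4)).indicator
          (fun _ => 4 * Υ) y := indicator_nonneg (fun _ _ => by positivity) y
      have hs₁ : s ≤ 1 := by nlinarith
      rw [integral_lune_slice_of_half_lt h0 hs_large hsy, abs_le]
      constructor <;> nlinarith [mul_nonneg (sq_nonneg Υ) hs₀, mul_nonneg (sq_nonneg Υ) h0]
    -- `s ≤ Υ/2` forces `|y| ≥ y² ≥ 1 - Υ²/4`
    · have hy_far : y ∉ Ioo (-(1 - Υ ^ 2 / 4)) (1 - Υ ^ 2 / 4) := by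
        rintro ⟨hl, hr⟩
        nlinarith
      rw [integral_lune_slice_of_le_half h0 hs₀ hs_small hsy,
        indicator_of_mem (show y ∈ Ioo (-1) 1 \ _ from ⟨⟨hyl, hyr⟩, hy_far⟩), abs_le]
      constructor <;> nlinarith [pow_nonneg hs₀ 3, mul_nonneg (sq_nonneg y) hs₀]
  · have hslice : ∀ x, (x, y) ∉ lune Υ := fun x hx => hy ⟨by nlinarith [hx.1], by nlinarith [hx.1]⟩
    simp [indicator_of_notMem (hslice _), indicator_of_notMem hy,
      indicator_of_notMem (fun h : y ∈ Ioo (-1) 1 \ _ => hy h.1)]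

theorem integrableOn_lune (Υ : ℝ) :
    IntegrableOn (fun p : ℝ × ℝ => 4 * (p.1 ^ 2 + p.2 ^ 2)) (lune Υ) := by
  have hsquare : IsCompact (Icc (-1 : ℝ) 1 ×ˢ Icc (-1 : ℝ) 1) := isCompact_Icc.prod isCompact_Icc
  refine (ContinuousOn.integrableOn_compact hsquare (by fun_prop)).mono_set ?_
  rintro ⟨x, y⟩ ⟨hin, -⟩
  exact ⟨⟨by nlinarith, by nlinarith⟩, ⟨by nlinarith, by nlinarith⟩⟩

theorem abs_integral_lune_sub_le {Υ : ℝ} (h0 : 0 ≤ Υ) (h1 : Υ ≤ 1) :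
    |(∫ p in lune Υ, 4 * (p.1 ^ 2 + p.2 ^ 2)) - 8 * Υ| ≤ 10 * Υ ^ 2 := by
  set a := 1 - Υ ^ 2 / 4 with ha_def
  have ha₀ : 0 ≤ a := by nlinarith
  have ha₁ : a ≤ 1 := by nlinarith
  have hconst : ∀ (c : ℝ) {t : Set ℝ}, MeasurableSet t → t ⊆ Ioo (-1) 1 →
      Integrable (t.indicator fun _ => c) := fun c t ht hsub =>
    (integrableOn_const ((measure_mono hsub).trans_lt measure_Ioo_lt_top).ne).integrable_indicator
      ht
  have hint := (integrable_indicator_iff (measurableSet_lune Υ)).mpr (integrableOn_lune Υ)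
  rw [Measure.volume_eq_prod] at hint
  have hIoo : volume.real (Ioo (-1 : ℝ) 1) = 2 := by rw [volume_real_Ioo_of_le] <;> norm_num
  have hbad : volume.real (Ioo (-1 : ℝ) 1 \ Ioo (-a) a) = Υ ^ 2 / 2 := by
    rw [measureReal_sdiff (Ioo_subset_Ioo (by linarith) ha₁) measurableSet_Ioo
      measure_Ioo_lt_top.ne, hIoo, volume_real_Ioo_of_le (by linarith)]
    ring
  have hcentral : ∫ y, (Ioo (-1 : ℝ) 1).indicator (fun _ => 4 * Υ) y = 8 * Υ := by
    rw [integral_indicator_const _ measurableSet_Ioo, hIoo, smul_eq_mul]; ring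
  have hmajorant : ∫ y, ((Ioo (-1 : ℝ) 1).indicator (fun _ => 4 * Υ ^ 2) y
      + (Ioo (-1 : ℝ) 1 \ Ioo (-a) a).indicator (fun _ => 4 * Υ) y) = 8 * Υ ^ 2 + 2 * Υ ^ 3 := by
    rw [integral_add (hconst _ measurableSet_Ioo subset_rfl)
        (hconst _ (measurableSet_Ioo.diff measurableSet_Ioo) sdiff_subset),
      integral_indicator_const _ measurableSet_Ioo,
      integral_indicator_const _ (measurableSet_Ioo.diff measurableSet_Ioo), hIoo, hbad,
      smul_eq_mul, smul_eq_mul]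
    ring
  rw [← integral_indicator (measurableSet_lune Υ), Measure.volume_eq_prod,
    integral_prod_symm _ hint, ← hcentral, ← integral_sub hint.integral_prod_right
      (hconst _ measurableSet_Ioo subset_rfl), ← Real.norm_eq_abs]
  calc _ ≤ ∫ y, ((Ioo (-1 : ℝ) 1).indicator (fun _ => 4 * Υ ^ 2) y
        + (Ioo (-1 : ℝ) 1 \ Ioo (-a) a).indicator (fun _ => 4 * Υ) y) :=
        norm_integral_le_of_norm_le
          ((hconst _ measurableSet_Ioo subset_rfl).add
            (hconst _ (measurableSet_Ioo.diff measurableSet_Ioo) sdiff_subset))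
          (.of_forall fun y => abs_integral_lune_slice_sub_le h0 h1 y)
    _ ≤ 10 * Υ ^ 2 := by rw [hmajorant]; nlinarith [pow_le_pow_left₀ h0 h1 2]

theorem norm_pt2_lt_one_iff (a b : ℝ) : ‖pt2 a b‖ < 1 ↔ a ^ 2 + b ^ 2 < 1 := by
  rw [← norm_pt2_sq, sq_lt_one_iff₀ (norm_nonneg _)]

theorem pt2_mem_ball_sdiff_ball_iff (Υ a b : ℝ) :
    pt2 a b ∈ Metric.ball 0 1 \ Metric.ball (ctr Υ) 1 ↔ (a, b) ∈ lune Υ := by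
  simp only [mem_sdiff, mem_ball_iff_norm, ctr, pt2_sub_pt2, sub_zero,
    norm_pt2_lt_one_iff, not_lt, lune, mem_ofPred_eq]

theorem norm_gradient_uSol_sub_gradient_urSol_sq {Υ : ℝ} {x : EuclideanSpace ℝ (Fin 2)}
    (hx : x ∈ Metric.ball 0 1 ∩ Metric.ball (ctr Υ) 1) :
    ‖gradient uSol x - gradient (urSol Υ) x‖ ^ 2 = 4 * Υ ^ 2 := by
  rw [gradient_uSol (mem_ball_zero_iff.mp hx.1), gradient_urSol (mem_ball_iff_norm.mp hx.2),
    ← smul_sub, sub_sub_cancel, norm_smul, mul_pow, ctr, norm_pt2_sq]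
  norm_num

theorem setIntegral_norm_gradient_uSol_sq_eq_lune (Υ : ℝ) :
    ∫ x in Metric.ball 0 1 \ Metric.ball (ctr Υ) 1, ‖gradient uSol x‖ ^ 2
      = ∫ p in lune Υ, 4 * (p.1 ^ 2 + p.2 ^ 2) := by
  have hmeas : MeasurableSet
      (Metric.ball (0 : EuclideanSpace ℝ (Fin 2)) 1 \ Metric.ball (ctr Υ) 1) :=
    measurableSet_ball.diff measurableSet_ball
  rw [setIntegral_congr_fun hmeas (g := fun x => 4 * ‖x‖ ^ 2) fun x hx => by
      rw [gradient_uSol (mem_ball_zero_iff.mp hx.1), norm_smul, mul_pow]; norm_num,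
    ← integral_indicator hmeas, ← integral_indicator (measurableSet_lune Υ),
    integral_euclideanSpace_fin_two]
  congr 1 with p
  by_cases hp : p ∈ lune Υ
  · rw [indicator_of_mem ((pt2_mem_ball_sdiff_ball_iff Υ p.1 p.2).mpr hp), indicator_of_mem hp,
      norm_pt2_sq]
  · rw [indicator_of_notMem (mt (pt2_mem_ball_sdiff_ball_iff Υ p.1 p.2).mp hp),
      indicator_of_notMem hp]

theorem shifted_disc_H1_sharpness :
    ∃ C : ℝ, 0 < C ∧ ∀ Υ ∈ Ioo (0:ℝ) 1,
      |(∫ x in Metric.ball (0 : EuclideanSpace ℝ (Fin 2)) 1 ∩ Metric.ball (ctr Υ) 1,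
          ‖gradient uSol x - gradient (urSol Υ) x‖^2)
        + (∫ x in Metric.ball (0 : EuclideanSpace ℝ (Fin 2)) 1 \ Metric.ball (ctr Υ) 1,
            ‖gradient uSol x‖^2)
        - 8 * Υ| ≤ C * Υ^2 := by
  refine ⟨4 * π + 10, by positivity, fun Υ ⟨h0, h1⟩ => ?_⟩
  set V := volume.real (Metric.ball (0 : EuclideanSpace ℝ (Fin 2)) 1 ∩ Metric.ball (ctr Υ) 1)
  have hV : V ≤ π := by
    refine (measureReal_mono inter_subset_left).trans_eq ?_
    simp [Measure.real, pi_nonneg]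
  have hlens : ∫ x in Metric.ball 0 1 ∩ Metric.ball (ctr Υ) 1,
      ‖gradient uSol x - gradient (urSol Υ) x‖ ^ 2 = V * (4 * Υ ^ 2) := by
    rw [setIntegral_congr_fun (measurableSet_ball.inter measurableSet_ball)
      fun x hx => norm_gradient_uSol_sub_gradient_urSol_sq hx, setIntegral_const, smul_eq_mul]
  rw [hlens, setIntegral_norm_gradient_uSol_sq_eq_lune, add_sub_assoc]
  have hlune := abs_integral_lune_sub_le h0.le h1.le
  calc _ ≤ |V * (4 * Υ ^ 2)| + |(∫ p in lune Υ, 4 * (p.1 ^ 2 + p.2 ^ 2)) - 8 * Υ| := abs_add_le _ _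
    _ ≤ π * (4 * Υ ^ 2) + 10 * Υ ^ 2 := by
        rw [abs_of_nonneg (by positivity)]
        gcongr
    _ = (4 * π + 10) * Υ ^ 2 := by ring
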